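/- Let W be a closed linear subspace of L²(C, μ) such that e^{i⟨a,·⟩} ψ ∈ W for every ψ ∈ W and every a ∈ ℝⁿ. Then there exists a measurable subset C′ ⊆ C such that W = {ψ ∈ L²(C,μ) : ψ = 0 μ-almost everywhere on C ∖ C′}. -/

import Mathlib

open MeasureTheory Metric Set ComplexConjugate SchwartzMap
open scoped ENNReal Real RealInnerProductSpace InnerProductSpace FourierTransform

noncomputable section

/-- Signature coefficients of the quadratic form of signature `(p-1, q-1)`. -/
def sgnc (p : ℕ) {m : ℕ} (i : Fin m) : ℝ := if (i : ℕ) < p - 1 then 1 else -1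

/-- The quadratic form `Q(ζ) = ζ₁²+⋯+ζ_{p−1}² − ζ_p² − ⋯ − ζ_n²`. -/
def Qform (p : ℕ) {m : ℕ} (ζ : Fin m → ℝ) : ℝ := ∑ i, sgnc p i * ζ i ^ 2

/-- The null cone `C = {ζ ≠ 0 : Q(ζ) = 0}`. -/
def coneSet (p m : ℕ) : Set (Fin m → ℝ) := {ζ | ζ ≠ 0 ∧ Qform p ζ = 0}

/-- Euclidean dot product on `ℝⁿ`. -/
def dotp {m : ℕ} (z ζ : Fin m → ℝ) : ℝ := ∑ i, z i * ζ i

/-- Euclidean norm on `ℝⁿ`. -/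
def enorm' {m : ℕ} (ζ : Fin m → ℝ) : ℝ := Real.sqrt (∑ i, ζ i ^ 2)

/-- The polar parametrization `(s, ω, ω′) ↦ (sω, sω′)` of the null cone. -/
def polarMap (p q : ℕ)
    (x : ℝ × (sphere (0 : EuclideanSpace ℝ (Fin (p - 1))) 1 ×
              sphere (0 : EuclideanSpace ℝ (Fin (q - 1))) 1)) :
    Fin (p + q - 2) → ℝ := fun i =>
  if h : (i : ℕ) < p - 1 then x.1 * (x.2.1 : EuclideanSpace ℝ (Fin (p - 1))) ⟨i, h⟩
  else if h' : (i : ℕ) - (p - 1) < q - 1 then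
    x.1 * (x.2.2 : EuclideanSpace ℝ (Fin (q - 1))) ⟨(i : ℕ) - (p - 1), h'⟩
  else 0

/-- The measure `μ = δ(Q)` on the null cone, defined by
`∫_C φ dμ = (1/2)∫₀^∞ ∫_{S^{p−2}} ∫_{S^{q−2}} φ(sω, sω′) s^{n−3} dω dω′ ds`. -/
def coneMeasure (p q : ℕ) : Measure (Fin (p + q - 2) → ℝ) :=
  (2 : ℝ≥0∞)⁻¹ •
    Measure.map (polarMap p q)
      ((((volume : Measure ℝ).restrict (Ioi 0)).withDensity
          fun s => ENNReal.ofReal (s ^ (p + q - 5))).prod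
        ((Measure.toSphere (volume : Measure (EuclideanSpace ℝ (Fin (p - 1))))).prod
          (Measure.toSphere (volume : Measure (EuclideanSpace ℝ (Fin (q - 1)))))))

/-- Fourier transform, normalized `(𝓕φ)(ζ) = ∫ φ(z) e^{i⟨z,ζ⟩} dz`. -/
def FT {m : ℕ} (φ : (Fin m → ℝ) → ℂ) (ζ : Fin m → ℝ) : ℂ :=
  ∫ z, Complex.exp (Complex.I * (dotp z ζ : ℝ)) * φ z


/-- A compactly supported smooth function is a Schwartz function. -/
def csSchwartz {m : ℕ} (f : EuclideanSpace ℝ (Fin m) → ℂ) (hf : ContDiff ℝ ((⊤ : ℕ∞) : WithTop ℕ∞) f)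
    (h2 : HasCompactSupport f) : 𝓢(EuclideanSpace ℝ (Fin m), ℂ) where
  toFun := f
  smooth' := hf
  decay' := by
    intro k n
    have hg : Continuous fun x : EuclideanSpace ℝ (Fin m) =>
        ‖x‖ ^ k * ‖iteratedFDeriv ℝ n f x‖ :=
      ((continuous_norm).pow k).mul (hf.continuous_iteratedFDeriv (mod_cast le_top)).norm
    have hsupp : HasCompactSupport fun x : EuclideanSpace ℝ (Fin m) =>
        ‖x‖ ^ k * ‖iteratedFDeriv ℝ n f x‖ :=
      ((h2.iteratedFDeriv n).norm).mul_left
    obtain ⟨C, hC⟩ := (hg.bddAbove_range_of_hasCompactSupport hsupp).imp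
      fun C hC => fun x => hC (Set.mem_range_self x)
    exact ⟨C, hC⟩

/-- Fourier uniqueness: an integrable function against an s-finite measure whose
"Fourier coefficients" all vanish is a.e. zero. Euclidean-space version. -/
lemma fourier_unique {m : ℕ} (μ : Measure (EuclideanSpace ℝ (Fin m))) [SFinite μ]
    (h : EuclideanSpace ℝ (Fin m) → ℂ) (hh : Integrable h μ)
    (H : ∀ a : EuclideanSpace ℝ (Fin m),
      ∫ ζ, Complex.exp (Complex.I * (⟪a, ζ⟫_ℝ : ℝ)) * h ζ ∂μ = 0) :
    ∀ᵐ ζ ∂μ, h ζ = 0 := by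
  apply ae_eq_zero_of_integral_contDiff_smul_eq_zero (hh.locallyIntegrable)
  intro g hg hgsupp
  set G : 𝓢(EuclideanSpace ℝ (Fin m), ℂ) := csSchwartz (fun x => (g x : ℂ))
    (Complex.ofRealCLM.contDiff.comp hg) (hgsupp.comp_left (g := (Complex.ofReal ·)) rfl) with hG
  set u : 𝓢(EuclideanSpace ℝ (Fin m), ℂ) := (fourierTransformCLE ℝ 𝓢(EuclideanSpace ℝ (Fin m), ℂ)).symm G with hu
  have hGu : ∀ ζ, G ζ = ∫ v, Complex.exp ((↑(-2 * π * ⟪v, ζ⟫_ℝ) * Complex.I)) • u v := by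
    intro ζ
    have : (fourierTransformCLE ℝ 𝓢(EuclideanSpace ℝ (Fin m), ℂ)) u = G := (fourierTransformCLE ℝ 𝓢(EuclideanSpace ℝ (Fin m), ℂ)).apply_symm_apply G
    rw [← this]; exact Real.fourier_eq' (u : EuclideanSpace ℝ (Fin m) → ℂ) ζ
  have key : ∀ v : EuclideanSpace ℝ (Fin m),
      ∫ ζ, Complex.exp ((↑(-2 * π * ⟪v, ζ⟫_ℝ) * Complex.I)) * u v * h ζ ∂μ = 0 := by
    intro v
    have e1 : ∀ ζ, Complex.exp ((↑(-2 * π * ⟪v, ζ⟫_ℝ) * Complex.I)) * u v * h ζ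
        = u v * (Complex.exp (Complex.I * ((⟪(-2 * π) • v, ζ⟫_ℝ : ℝ))) * h ζ) := by
      intro ζ
      rw [real_inner_smul_left]
      ring_nf
    simp_rw [e1, integral_const_mul, H, mul_zero]
  have hswap : ∫ ζ, ∫ v, Complex.exp ((↑(-2 * π * ⟪v, ζ⟫_ℝ) * Complex.I)) * u v * h ζ
        ∂(volume) ∂μ
      = ∫ v, ∫ ζ, Complex.exp ((↑(-2 * π * ⟪v, ζ⟫_ℝ) * Complex.I)) * u v * h ζ
        ∂μ ∂(volume) := by
    apply integral_integral_swap
    have hbound : Integrable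
        (fun z : EuclideanSpace ℝ (Fin m) × EuclideanSpace ℝ (Fin m) => ‖h z.1‖ * ‖u z.2‖)
        (μ.prod volume) :=
      hh.norm.mul_prod u.integrable.norm
    have hcont : Continuous fun z : EuclideanSpace ℝ (Fin m) × EuclideanSpace ℝ (Fin m) =>
        Complex.exp ((↑(-2 * π * ⟪z.2, z.1⟫_ℝ) * Complex.I)) * u z.2 := by
      apply Continuous.mul _ (u.continuous.comp continuous_snd)
      exact Complex.continuous_exp.comp ((Complex.continuous_ofReal.comp
        ((continuous_const.mul (continuous_inner.comp continuous_swap)))).mul continuous_const)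
    have hmeas : AEStronglyMeasurable
        (fun z : EuclideanSpace ℝ (Fin m) × EuclideanSpace ℝ (Fin m) =>
          Complex.exp ((↑(-2 * π * ⟪z.2, z.1⟫_ℝ) * Complex.I)) * u z.2 * h z.1)
        (μ.prod volume) := by
      exact (hcont.aestronglyMeasurable).mul
        (hh.1.comp_quasiMeasurePreserving MeasureTheory.Measure.quasiMeasurePreserving_fst)
    apply hbound.mono' hmeas
    refine Filter.Eventually.of_forall fun z => ?_
    rw [norm_mul, norm_mul, Complex.norm_exp_ofReal_mul_I, one_mul, mul_comm]
  calc ∫ x, g x • h x ∂μ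
      = ∫ ζ, ∫ v, Complex.exp ((↑(-2 * π * ⟪v, ζ⟫_ℝ) * Complex.I)) * u v * h ζ
          ∂(volume) ∂μ := by
        refine integral_congr_ae (Filter.Eventually.of_forall fun ζ => ?_)
        beta_reduce
        have h1 : G ζ = (g ζ : ℂ) := rfl
        calc g ζ • h ζ = G ζ * h ζ := by rw [h1, Complex.real_smul]
          _ = (∫ v, Complex.exp ((↑(-2 * π * ⟪v, ζ⟫_ℝ) * Complex.I)) • u v) * h ζ := by
              rw [hGu ζ]
          _ = ∫ v, Complex.exp ((↑(-2 * π * ⟪v, ζ⟫_ℝ) * Complex.I)) • u v * h ζ :=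
              (integral_mul_const (h ζ) _).symm
          _ = ∫ v, Complex.exp ((↑(-2 * π * ⟪v, ζ⟫_ℝ) * Complex.I)) * u v * h ζ := by
              simp_rw [smul_eq_mul]
    _ = 0 := by rw [hswap]; simp only [key, integral_zero]

/-- Fourier uniqueness, version for the plain pi-type `Fin m → ℝ`. -/
lemma fourier_unique_pi {m : ℕ} (μ : Measure (Fin m → ℝ)) [SFinite μ]
    (h : (Fin m → ℝ) → ℂ) (hh : Integrable h μ)
    (H : ∀ a : Fin m → ℝ, ∫ ζ, Complex.exp (Complex.I * (dotp a ζ : ℝ)) * h ζ ∂μ = 0) :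
    ∀ᵐ ζ ∂μ, h ζ = 0 := by
  set e := (MeasurableEquiv.toLp 2 (Fin m → ℝ)).symm with he
  set ν : Measure (EuclideanSpace ℝ (Fin m)) := μ.map e.symm with hν
  have hid : ∀ (x : Fin m → ℝ) i, (e.symm x : EuclideanSpace ℝ (Fin m)) i = x i :=
    fun x i => rfl
  have hid2 : ∀ (y : EuclideanSpace ℝ (Fin m)) i, e y i = y i := fun y i => rfl
  have hh' : Integrable (fun y : EuclideanSpace ℝ (Fin m) => h (e y)) ν := by
    rw [hν, integrable_map_equiv]
    convert hh using 1
    exact funext fun x => by simp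
  have H' : ∀ a : EuclideanSpace ℝ (Fin m),
      ∫ ζ, Complex.exp (Complex.I * (⟪a, ζ⟫_ℝ : ℝ)) * h (e ζ) ∂ν = 0 := by
    intro a
    rw [hν, integral_map_equiv]
    have : ∀ x : Fin m → ℝ, ⟪a, e.symm x⟫_ℝ = dotp (e a) x := by
      intro x
      simp [PiLp.inner_apply, dotp, RCLike.inner_apply, hid, hid2, mul_comm]
    simp_rw [this, MeasurableEquiv.apply_symm_apply]
    exact H (e a)
  have := fourier_unique ν _ hh' H'
  rw [hν, ← MeasurableEquiv.map_ae e.symm] at this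
  rw [Filter.eventually_map] at this
  convert this using 2
  simp

/-- Multiplication by a character preserves membership in `L²`. -/
lemma char_memLp {m : ℕ} {μ : Measure (Fin m → ℝ)} (a : Fin m → ℝ) (f : Lp ℂ 2 μ) :
    MemLp (fun ζ => Complex.exp (Complex.I * (dotp a ζ : ℝ)) * f ζ) 2 μ := by
  have hcont : Continuous fun ζ : Fin m → ℝ => Complex.exp (Complex.I * (dotp a ζ : ℝ)) := by
    apply Complex.continuous_exp.comp
    apply Continuous.mul continuous_const
    apply Complex.continuous_ofReal.comp
    unfold dotp
    exact continuous_finset_sum _ fun i _ => continuous_const.mul (continuous_apply i)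
  have hnorm : ∀ ζ, ‖Complex.exp (Complex.I * (dotp a ζ : ℝ)) * f ζ‖ = ‖f ζ‖ := by
    intro ζ
    rw [norm_mul, mul_comm Complex.I, Complex.norm_exp_ofReal_mul_I, one_mul]
  refine ⟨hcont.aestronglyMeasurable.mul (Lp.aestronglyMeasurable f), ?_⟩
  rw [eLpNorm_congr_norm_ae (Filter.Eventually.of_forall fun ζ => hnorm ζ)]
  exact (Lp.memLp f).2

lemma sphere_sum_sq {k : ℕ} (ω : sphere (0 : EuclideanSpace ℝ (Fin k)) 1) :
    ∑ j, ((ω : EuclideanSpace ℝ (Fin k)) j) ^ 2 = 1 := by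
  have hω : ‖(ω : EuclideanSpace ℝ (Fin k))‖ = 1 := by
    simpa using mem_sphere_zero_iff_norm.1 ω.2
  rw [EuclideanSpace.norm_eq] at hω
  have := Real.sqrt_eq_one.1 (by simpa using hω)
  simpa [Real.norm_eq_abs, sq_abs] using this

lemma polar_mem_cone (p q : ℕ) (hp : 2 ≤ p) (hq : 2 ≤ q)
    (x : ℝ × (sphere (0 : EuclideanSpace ℝ (Fin (p - 1))) 1 ×
              sphere (0 : EuclideanSpace ℝ (Fin (q - 1))) 1))
    (hx : 0 < x.1) : polarMap p q x ∈ coneSet p (p + q - 2) := by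
  obtain ⟨s, ω, ω'⟩ := x
  simp only at hx
  have hne : p + q - 2 = (p - 1) + (q - 1) := by omega
  set e : Fin (p - 1) ⊕ Fin (q - 1) ≃ Fin (p + q - 2) :=
    finSumFinEquiv.trans (finCongr hne.symm) with he
  have hval1 : ∀ a : Fin (p - 1), ((e (Sum.inl a) : Fin (p + q - 2)) : ℕ) = (a : ℕ) := by
    intro a; simp [he]
  have hval2 : ∀ b : Fin (q - 1),
      ((e (Sum.inr b) : Fin (p + q - 2)) : ℕ) = (p - 1) + (b : ℕ) := by
    intro b; simp [he]
  have hpolar_lt : ∀ (i : Fin (p + q - 2)) (h : (i : ℕ) < p - 1),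
      polarMap p q (s, ω, ω') i = s * (ω : EuclideanSpace ℝ (Fin (p - 1))) ⟨i, h⟩ :=
    fun i h => dif_pos h
  have hpolar_ge : ∀ (i : Fin (p + q - 2)) (h : ¬ (i : ℕ) < p - 1),
      polarMap p q (s, ω, ω') i
        = s * (ω' : EuclideanSpace ℝ (Fin (q - 1))) ⟨(i : ℕ) - (p - 1), by omega⟩ := by
    intro i h
    have h' : (i : ℕ) - (p - 1) < q - 1 := by omega
    show dite _ _ _ = _
    rw [dif_neg h, dif_pos h']
  constructor
  · have : ∃ j, (ω : EuclideanSpace ℝ (Fin (p - 1))) j ≠ 0 := by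
      by_contra hcon
      push_neg at hcon
      have h1 := sphere_sum_sq ω
      rw [Finset.sum_eq_zero (fun j _ => by rw [hcon j]; ring)] at h1
      norm_num at h1
    obtain ⟨j, hj⟩ := this
    intro hzero
    have hjn : (j : ℕ) < p + q - 2 := by omega
    have := congrFun hzero ⟨(j : ℕ), hjn⟩
    rw [hpolar_lt ⟨(j : ℕ), hjn⟩ (by simpa using j.2)] at this
    simp only [Pi.zero_apply] at this
    rcases mul_eq_zero.1 this with h | h
    · exact absurd h (ne_of_gt hx)
    · apply hj
      convert h using 2
  · show Qform p _ = 0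
    unfold Qform
    have hsum := (Fintype.sum_equiv e
      (fun x => sgnc p (e x) * polarMap p q (s, ω, ω') (e x) ^ 2)
      (fun i => sgnc p i * polarMap p q (s, ω, ω') i ^ 2) (fun x => rfl)).symm
    rw [hsum, Fintype.sum_sum_type]
    have h1 : ∀ a : Fin (p - 1),
        sgnc p (e (Sum.inl a)) * polarMap p q (s, ω, ω') (e (Sum.inl a)) ^ 2
          = s ^ 2 * ((ω : EuclideanSpace ℝ (Fin (p - 1))) a) ^ 2 := by
      intro a
      have ha : ((e (Sum.inl a)) : ℕ) < p - 1 := by rw [hval1]; exact a.2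
      rw [hpolar_lt _ ha, sgnc, if_pos ha]
      have : (⟨((e (Sum.inl a)) : ℕ), ha⟩ : Fin (p - 1)) = a := by
        ext; exact hval1 a
      rw [this]; ring
    have h2 : ∀ b : Fin (q - 1),
        sgnc p (e (Sum.inr b)) * polarMap p q (s, ω, ω') (e (Sum.inr b)) ^ 2
          = -(s ^ 2 * ((ω' : EuclideanSpace ℝ (Fin (q - 1))) b) ^ 2) := by
      intro b
      have hb : ¬ ((e (Sum.inr b)) : ℕ) < p - 1 := by rw [hval2]; omega
      rw [hpolar_ge _ hb, sgnc, if_neg hb]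
      have : (⟨((e (Sum.inr b)) : ℕ) - (p - 1), by omega⟩ : Fin (q - 1)) = b := by
        ext
        simp only [Fin.val_mk]
        rw [hval2 b]
        omega
      rw [this]; ring
    simp_rw [h1, h2]
    rw [Finset.sum_neg_distrib, ← Finset.mul_sum, ← Finset.mul_sum,
      sphere_sum_sq ω, sphere_sum_sq ω']
    ring

lemma polarMap_continuous (p q : ℕ) : Continuous (polarMap p q) := by
  apply continuous_pi
  intro i
  unfold polarMap
  by_cases h : (i : ℕ) < p - 1
  · simp only [dif_pos h]
    exact continuous_fst.mul (((EuclideanSpace.proj (⟨i, h⟩ : Fin (p - 1))).continuous.comp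
      continuous_subtype_val).comp (continuous_fst.comp continuous_snd))
  · simp only [dif_neg h]
    by_cases h' : (i : ℕ) - (p - 1) < q - 1
    · simp only [dif_pos h']
      exact continuous_fst.mul (((EuclideanSpace.proj
        (⟨(i : ℕ) - (p - 1), h'⟩ : Fin (q - 1))).continuous.comp
        continuous_subtype_val).comp (continuous_snd.comp continuous_snd))
    · simp only [dif_neg h']
      exact continuous_const

lemma coneSet_measurable (p m : ℕ) : MeasurableSet (coneSet p m) := by
  have h1 : Continuous (Qform p (m := m)) := by
    unfold Qform
    exact continuous_finset_sum _ fun i _ => (continuous_const.mul ((continuous_apply i).pow 2))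
  have : coneSet p m = ({(0 : Fin m → ℝ)}ᶜ : Set _) ∩ (Qform p ⁻¹' {0}) := by
    ext ζ; simp [coneSet]
  rw [this]
  exact (MeasurableSet.singleton 0).compl.inter (h1.measurable (MeasurableSet.singleton 0))

set_option synthInstance.maxHeartbeats 1000000 in
instance coneMeasure_sfinite (p q : ℕ) : SFinite (coneMeasure p q) := by
  unfold coneMeasure; infer_instance

lemma cone_ae (p q : ℕ) (hp : 2 ≤ p) (hq : 2 ≤ q) :
    ∀ᵐ ζ ∂(coneMeasure p q), ζ ∈ coneSet p (p + q - 2) := by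
  rw [coneMeasure]
  apply Measure.ae_smul_measure
  rw [ae_iff]
  have hcompl : {a | a ∉ coneSet p (p + q - 2)} = (coneSet p (p + q - 2))ᶜ := rfl
  rw [hcompl, Measure.map_apply (polarMap_continuous p q).measurable
    (coneSet_measurable p (p + q - 2)).compl]
  apply measure_mono_null (t := (Iic (0 : ℝ)) ×ˢ univ)
  · intro x hx
    rcases le_or_gt x.1 0 with h | h
    · exact ⟨h, trivial⟩
    · exact absurd (polar_mem_cone p q hp hq x h) hx
  · rw [Measure.prod_prod]
    have : (((volume : Measure ℝ).restrict (Ioi 0)).withDensity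
        fun s => ENNReal.ofReal (s ^ (p + q - 5))) (Iic 0) = 0 := by
      rw [withDensity_apply _ measurableSet_Iic, Measure.restrict_restrict measurableSet_Iic]
      have : Iic (0:ℝ) ∩ Ioi 0 = ∅ := by
        ext t; simp
      rw [this, Measure.restrict_empty, lintegral_zero_measure]
    rw [this, zero_mul]

set_option maxHeartbeats 1000000 in
set_option synthInstance.maxHeartbeats 1000000 in
/-- A closed subspace of `L²(C,μ)` invariant under multiplication by all
characters `e^{i⟨a,·⟩}` is of the form `L²(C′)` for some measurable `C′ ⊆ C`, i.e. consists
exactly of the elements vanishing μ-a.e. off `C′`. -/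
theorem statement5 (p q : ℕ) (hp : 2 ≤ p) (hq : 2 ≤ q) (hn : 2 < p + q - 2)
    (W : Submodule ℂ (Lp ℂ 2 (coneMeasure p q)))
    (hWclosed : IsClosed (W : Set (Lp ℂ 2 (coneMeasure p q))))
    (hWa : ∀ ψ : Lp ℂ 2 (coneMeasure p q), ψ ∈ W →
      ∀ a : Fin (p + q - 2) → ℝ,
        ∀ ψ' : Lp ℂ 2 (coneMeasure p q),
          ⇑ψ' =ᵐ[coneMeasure p q]
            (fun ζ => Complex.exp (Complex.I * (dotp a ζ : ℝ)) * ψ ζ) → ψ' ∈ W) :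
    ∃ C' : Set (Fin (p + q - 2) → ℝ), MeasurableSet C' ∧ C' ⊆ coneSet p (p + q - 2) ∧
      ∀ ψ : Lp ℂ 2 (coneMeasure p q),
        (ψ ∈ W ↔ ∀ᵐ ζ ∂coneMeasure p q, ζ ∉ C' → ψ ζ = 0) := by
  classical
  haveI : CompleteSpace (↥W) := by exact hWclosed.completeSpace_coe
  haveI : Fact ((2 : ℝ≥0∞) ≠ ∞) := ⟨by norm_num⟩
  haveI : SecondCountableTopology (Lp ℂ 2 (coneMeasure p q)) := inferInstance
  obtain ⟨D, hDcount, hDdense⟩ := TopologicalSpace.exists_countable_dense (↥W)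
  set S : Set (Fin (p + q - 2) → ℝ) :=
    ⋃ w ∈ D, {ζ | ¬ (((w : ↥W) : Lp ℂ 2 (coneMeasure p q)) ζ = 0)} with hSdef
  have hSmeas : MeasurableSet S :=
    MeasurableSet.biUnion hDcount fun w _ =>
      ((Lp.stronglyMeasurable ((w : ↥W) : Lp ℂ 2 (coneMeasure p q))).measurable
        (measurableSet_singleton (0 : ℂ))).compl
  have hnotS : ∀ ζ, ζ ∉ S → ∀ w ∈ D, ((w : ↥W) : Lp ℂ 2 (coneMeasure p q)) ζ = 0 := by
    intro ζ hζ w hw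
    by_contra hne
    exact hζ (mem_biUnion hw hne)
  -- forward direction
  have forward : ∀ ψ : Lp ℂ 2 (coneMeasure p q), ψ ∈ W → ∀ᵐ ζ ∂(coneMeasure p q), ζ ∉ S → ψ ζ = 0 := by
    intro ψ hψ
    have hsm : AEStronglyMeasurable (Sᶜ.indicator ⇑ψ) (coneMeasure p q) :=
      ((Lp.stronglyMeasurable ψ).indicator hSmeas.compl).aestronglyMeasurable
    have hbound : ∀ ε : ℝ, 0 < ε → eLpNorm (Sᶜ.indicator ⇑ψ) 2 (coneMeasure p q) ≤ ENNReal.ofReal ε := by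
      intro ε hε
      obtain ⟨w, hwD, hwdist⟩ := Metric.mem_closure_iff.1 (hDdense (⟨ψ, hψ⟩ : ↥W)) ε hε
      have hpt : Sᶜ.indicator ⇑ψ = Sᶜ.indicator (⇑ψ - ⇑((w : ↥W) : Lp ℂ 2 (coneMeasure p q))) := by
        funext ζ
        by_cases hζ : ζ ∈ Sᶜ
        · rw [indicator_of_mem hζ, indicator_of_mem hζ, Pi.sub_apply,
            hnotS ζ hζ w hwD, sub_zero]
        · rw [indicator_of_notMem hζ, indicator_of_notMem hζ]
      calc eLpNorm (Sᶜ.indicator ⇑ψ) 2 (coneMeasure p q)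
          = eLpNorm (Sᶜ.indicator (⇑ψ - ⇑((w : ↥W) : Lp ℂ 2 (coneMeasure p q)))) 2 (coneMeasure p q) := by rw [hpt]
        _ ≤ eLpNorm (⇑ψ - ⇑((w : ↥W) : Lp ℂ 2 (coneMeasure p q))) 2 (coneMeasure p q) := eLpNorm_indicator_le _
        _ = eLpNorm (⇑(ψ - ((w : ↥W) : Lp ℂ 2 (coneMeasure p q)))) 2 (coneMeasure p q) :=
            eLpNorm_congr_ae (Lp.coeFn_sub ψ _).symm
        _ = ENNReal.ofReal ‖ψ - ((w : ↥W) : Lp ℂ 2 (coneMeasure p q))‖ := by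
            rw [Lp.norm_def, ENNReal.ofReal_toReal (Lp.eLpNorm_ne_top _)]
        _ ≤ ENNReal.ofReal ε := by
            apply ENNReal.ofReal_le_ofReal
            have hd : dist (⟨ψ, hψ⟩ : ↥W) w < ε := hwdist
            rw [Subtype.dist_eq, dist_eq_norm] at hd
            exact hd.le
    have hzero : eLpNorm (Sᶜ.indicator ⇑ψ) 2 (coneMeasure p q) = 0 := by
      by_contra h0
      have hne : eLpNorm (Sᶜ.indicator ⇑ψ) 2 (coneMeasure p q) ≠ ⊤ :=
        ((eLpNorm_indicator_le _).trans_lt (Lp.eLpNorm_lt_top ψ)).ne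
      have hpos : 0 < (eLpNorm (Sᶜ.indicator ⇑ψ) 2 (coneMeasure p q)).toReal := ENNReal.toReal_pos h0 hne
      have h1 := hbound _ (half_pos hpos)
      have h2 : ENNReal.ofReal ((eLpNorm (Sᶜ.indicator ⇑ψ) 2 (coneMeasure p q)).toReal / 2)
          < eLpNorm (Sᶜ.indicator ⇑ψ) 2 (coneMeasure p q) := by
        conv_rhs => rw [← ENNReal.ofReal_toReal hne]
        exact (ENNReal.ofReal_lt_ofReal_iff hpos).2 (half_lt_self hpos)
      exact absurd h1 h2.not_ge
    have hae0 := (eLpNorm_eq_zero_iff hsm (by norm_num)).1 hzero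
    filter_upwards [hae0] with ζ hζ hζS
    have hind : Sᶜ.indicator ⇑ψ ζ = ψ ζ := indicator_of_mem (mem_compl hζS) _
    rw [← hind]
    simpa using hζ
  -- backward direction
  have backward : ∀ ψ : Lp ℂ 2 (coneMeasure p q), (∀ᵐ ζ ∂(coneMeasure p q), ζ ∉ S → ψ ζ = 0) → ψ ∈ W := by
    intro ψ hae
    set w : ↥W := W.orthogonalProjectionOnto ψ with hw
    set v : Lp ℂ 2 (coneMeasure p q) := ψ - (w : Lp ℂ 2 (coneMeasure p q)) with hv
    have hvmem : v ∈ Wᗮ := W.sub_starProjection_mem_orthogonal ψ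
    have hkey : ∀ w₀ ∈ D, (∀ᵐ ζ ∂(coneMeasure p q), ((w₀ : ↥W) : Lp ℂ 2 (coneMeasure p q)) ζ ≠ 0 → v ζ = 0) := by
      intro w₀ hw₀
      have hInt : Integrable
          (fun ζ => (starRingEnd ℂ) (((w₀ : ↥W) : Lp ℂ 2 (coneMeasure p q)) ζ) * v ζ) (coneMeasure p q) := by
        simpa [RCLike.inner_apply, mul_comm] using
          L2.integrable_inner (𝕜 := ℂ) ((w₀ : ↥W) : Lp ℂ 2 (coneMeasure p q)) v
      have H : ∀ a : Fin (p + q - 2) → ℝ,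
          ∫ ζ, Complex.exp (Complex.I * (dotp a ζ : ℝ)) *
            ((starRingEnd ℂ) (((w₀ : ↥W) : Lp ℂ 2 (coneMeasure p q)) ζ) * v ζ) ∂(coneMeasure p q) = 0 := by
        intro a
        have hmem := char_memLp (-a) ((w₀ : ↥W) : Lp ℂ 2 (coneMeasure p q))
        have hχW : hmem.toLp _ ∈ W := hWa _ w₀.2 (-a) _ (MemLp.coeFn_toLp hmem)
        have h1 : (inner ℂ (hmem.toLp _) v : ℂ) = 0 :=
          Submodule.inner_right_of_mem_orthogonal hχW hvmem
        rw [L2.inner_def] at h1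
        have h2 : ∫ ζ, (inner ℂ ((hmem.toLp _) ζ) (v ζ) : ℂ) ∂(coneMeasure p q)
            = ∫ ζ, Complex.exp (Complex.I * (dotp a ζ : ℝ)) *
                ((starRingEnd ℂ) (((w₀ : ↥W) : Lp ℂ 2 (coneMeasure p q)) ζ) * v ζ) ∂(coneMeasure p q) := by
          apply integral_congr_ae
          filter_upwards [MemLp.coeFn_toLp hmem] with ζ hζ
          rw [RCLike.inner_apply, hζ, map_mul]
          have hd : dotp (-a) ζ = -(dotp a ζ) := by
            simp [dotp, neg_mul, Finset.sum_neg_distrib]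
          rw [hd]
          have hconj : (starRingEnd ℂ) (Complex.exp (Complex.I * ((-(dotp a ζ) : ℝ) : ℂ)))
              = Complex.exp (Complex.I * ((dotp a ζ : ℝ) : ℂ)) := by
            rw [← Complex.exp_conj]
            congr 1
            rw [map_mul, Complex.conj_I, Complex.conj_ofReal]
            push_cast
            ring
          rw [hconj]
          ring
        rw [h2] at h1
        exact h1
      have hfu := fourier_unique_pi (coneMeasure p q) _ hInt H
      filter_upwards [hfu] with ζ hζ hw0
      rcases mul_eq_zero.1 hζ with h | h
      · have : star (((w₀ : ↥W) : Lp ℂ 2 (coneMeasure p q)) ζ) = 0 := h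
        exact absurd (star_eq_zero.1 this) hw0
      · exact h
    have hvS : ∀ᵐ ζ ∂(coneMeasure p q), ζ ∈ S → v ζ = 0 := by
      have hall := (ae_ball_iff hDcount).2 hkey
      filter_upwards [hall] with ζ hζ hζS
      obtain ⟨w₀, hw₀D, hval⟩ := mem_iUnion₂.1 hζS
      exact hζ w₀ hw₀D hval
    have h0 : (inner ℂ ψ v : ℂ) = 0 := by
      rw [L2.inner_def]
      apply integral_eq_zero_of_ae
      filter_upwards [hae, hvS] with ζ h1 h2
      rw [Pi.zero_apply, RCLike.inner_apply]
      by_cases hζ : ζ ∈ S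
      · simp [h2 hζ]
      · simp [h1 hζ]
    have hvv : (inner ℂ v v : ℂ) = 0 := by
      have hwv : (inner ℂ ((w : ↥W) : Lp ℂ 2 (coneMeasure p q)) v : ℂ) = 0 :=
        Submodule.inner_right_of_mem_orthogonal w.2 hvmem
      calc (inner ℂ v v : ℂ)
          = (inner ℂ ψ v : ℂ) - (inner ℂ ((w : ↥W) : Lp ℂ 2 (coneMeasure p q)) v : ℂ) := by
            rw [hv, inner_sub_left]
        _ = 0 := by rw [h0, hwv, sub_zero]
    have hv0 : v = 0 := inner_self_eq_zero.1 hvv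
    have hψw : ψ = ((w : ↥W) : Lp ℂ 2 (coneMeasure p q)) := by
      have hsub : ψ - ((w : ↥W) : Lp ℂ 2 (coneMeasure p q)) = 0 := by rw [← hv]; exact hv0
      exact sub_eq_zero.1 hsub
    rw [hψw]
    exact w.2
  refine ⟨S ∩ coneSet p (p + q - 2), hSmeas.inter (coneSet_measurable p (p + q - 2)),
    inter_subset_right, fun ψ => ?_⟩
  constructor
  · intro hψ
    filter_upwards [forward ψ hψ, cone_ae p q hp hq] with ζ h1 h2 h3
    exact h1 fun hζS => h3 ⟨hζS, h2⟩
  · intro h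
    apply backward ψ
    filter_upwards [h] with ζ h1 h2
    exact h1 fun hmem => h2 hmem.1


end
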